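/- arXiv:math/0605135 — 4 statements merged into one kernel-verified Lean document; each statement's English description precedes it below -/
import Mathlib

section
/- Fix L > 0. There is a constant C = C(L) such that: if l₁, l₂, l₃ ∈ (0, L] and d₃ > 0 satisfies cosh d₃ = (cosh l₃ + cosh l₁ cosh l₂)/(sinh l₁ sinh l₂), then |d₃ - (log(1/l₁) + log(1/l₂))| ≤ C. -/
open Real

lemma sinh_le_mul_exp (l : ℝ) : Real.sinh l ≤ l * Real.exp l := by
  rw [Real.sinh_eq]
  have h := Real.add_one_le_exp (-(2*l))
  have he : Real.exp (-(2*l)) * Real.exp l = Real.exp (-l) := by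
    rw [← Real.exp_add]; ring_nf
  nlinarith [Real.exp_pos l, Real.exp_pos (-l), Real.exp_pos (-(2*l))]

/-- Lemma `lem:width`, first assertion: if `l₁, l₂, l₃ ∈ (0, L]` and `d₃ > 0` satisfies
the hexagon cosine rule, then `d₃ = log(1/l₁) + log(1/l₂)` up to an additive constant
depending only on `L`. -/
theorem perpendicular_length_estimate (L : ℝ) (hL : 0 < L) :
    ∃ C : ℝ, ∀ l₁ l₂ l₃ d₃ : ℝ,
      0 < l₁ → l₁ ≤ L → 0 < l₂ → l₂ ≤ L → 0 < l₃ → l₃ ≤ L → 0 < d₃ →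
      Real.cosh d₃ =
        (Real.cosh l₃ + Real.cosh l₁ * Real.cosh l₂) / (Real.sinh l₁ * Real.sinh l₂) →
      |d₃ - (Real.log (1 / l₁) + Real.log (1 / l₂))| ≤ C := by
  set M : ℝ := Real.cosh L + Real.cosh L ^ 2 with hM
  have hcL : 1 ≤ Real.cosh L := Real.one_le_cosh L
  have hM2 : (2:ℝ) ≤ M := by nlinarith
  refine ⟨Real.log (2 * M) + 2 * L, ?_⟩
  intro l₁ l₂ l₃ d₃ h1 h1L h2 h2L h3 h3L hd heq
  have hs1 : 0 < Real.sinh l₁ := Real.sinh_pos_iff.2 h1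
  have hs2 : 0 < Real.sinh l₂ := Real.sinh_pos_iff.2 h2
  have hlb1 : l₁ ≤ Real.sinh l₁ := (Real.self_lt_sinh_iff.2 h1).le
  have hlb2 : l₂ ≤ Real.sinh l₂ := (Real.self_lt_sinh_iff.2 h2).le
  have hub1 : Real.sinh l₁ ≤ l₁ * Real.exp L :=
    (sinh_le_mul_exp l₁).trans (by
      have := Real.exp_le_exp.2 h1L; nlinarith)
  have hub2 : Real.sinh l₂ ≤ l₂ * Real.exp L :=
    (sinh_le_mul_exp l₂).trans (by
      have := Real.exp_le_exp.2 h2L; nlinarith)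
  -- numerator bounds
  have hnum_ub : Real.cosh l₃ + Real.cosh l₁ * Real.cosh l₂ ≤ M := by
    have c1 : Real.cosh l₁ ≤ Real.cosh L := Real.cosh_le_cosh.2 (by
      rw [abs_of_pos h1, abs_of_pos hL]; exact h1L)
    have c2 : Real.cosh l₂ ≤ Real.cosh L := Real.cosh_le_cosh.2 (by
      rw [abs_of_pos h2, abs_of_pos hL]; exact h2L)
    have c3 : Real.cosh l₃ ≤ Real.cosh L := Real.cosh_le_cosh.2 (by
      rw [abs_of_pos h3, abs_of_pos hL]; exact h3L)
    have p1 : 1 ≤ Real.cosh l₁ := Real.one_le_cosh l₁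
    have p2 : 1 ≤ Real.cosh l₂ := Real.one_le_cosh l₂
    nlinarith
  have hnum_lb : (2:ℝ) ≤ Real.cosh l₃ + Real.cosh l₁ * Real.cosh l₂ := by
    have p1 : 1 ≤ Real.cosh l₁ := Real.one_le_cosh l₁
    have p2 : 1 ≤ Real.cosh l₂ := Real.one_le_cosh l₂
    have p3 : 1 ≤ Real.cosh l₃ := Real.one_le_cosh l₃
    nlinarith
  have hden_pos : 0 < Real.sinh l₁ * Real.sinh l₂ := mul_pos hs1 hs2
  -- cosh d₃ bounds
  have hcosh_ub : Real.cosh d₃ ≤ M / (l₁ * l₂) := by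
    rw [heq]
    exact div_le_div₀ (by nlinarith) hnum_ub (mul_pos h1 h2)
      (mul_le_mul hlb1 hlb2 h2.le hs1.le)
  have hcosh_lb : 2 / (l₁ * l₂ * Real.exp L ^ 2) ≤ Real.cosh d₃ := by
    rw [heq]
    apply div_le_div₀ (by linarith) hnum_lb hden_pos
    calc Real.sinh l₁ * Real.sinh l₂ ≤ (l₁ * Real.exp L) * (l₂ * Real.exp L) :=
          mul_le_mul hub1 hub2 hs2.le (by positivity)
      _ = l₁ * l₂ * Real.exp L ^ 2 := by ring
  -- exp bounds
  have hexp_ub : Real.exp d₃ ≤ 2 * M / (l₁ * l₂) := by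
    have : Real.exp d₃ ≤ 2 * Real.cosh d₃ := by
      rw [Real.cosh_eq]
      have := Real.exp_pos (-d₃); linarith
    calc Real.exp d₃ ≤ 2 * Real.cosh d₃ := this
      _ ≤ 2 * (M / (l₁ * l₂)) := by linarith
      _ = 2 * M / (l₁ * l₂) := by ring
  have hexp_lb : 2 / (l₁ * l₂ * Real.exp L ^ 2) ≤ Real.exp d₃ := by
    refine hcosh_lb.trans ?_
    rw [Real.cosh_eq]
    have : Real.exp (-d₃) ≤ Real.exp d₃ := Real.exp_le_exp.2 (by linarith)
    linarith
  -- take logs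
  have hd_ub : d₃ ≤ Real.log (2 * M) - Real.log l₁ - Real.log l₂ := by
    have := Real.log_le_log (Real.exp_pos d₃) hexp_ub
    rw [Real.log_exp, Real.log_div (by positivity) (by positivity),
      Real.log_mul (ne_of_gt h1) (ne_of_gt h2)] at this
    linarith
  have hd_lb : Real.log 2 - Real.log l₁ - Real.log l₂ - 2 * L ≤ d₃ := by
    have := Real.log_le_log (by positivity) hexp_lb
    rw [Real.log_exp, Real.log_div (by norm_num) (by positivity),
      Real.log_mul (by positivity) (by positivity),
      Real.log_mul (ne_of_gt h1) (ne_of_gt h2), Real.log_pow, Real.log_exp] at this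
    push_cast at this
    linarith
  have hS : Real.log (1 / l₁) + Real.log (1 / l₂) = -Real.log l₁ - Real.log l₂ := by
    rw [one_div, one_div, Real.log_inv, Real.log_inv]; ring
  have hlog2M : Real.log 2 ≤ Real.log (2 * M) :=
    Real.log_le_log (by norm_num) (by nlinarith)
  have hlog2 : 0 < Real.log 2 := Real.log_pos (by norm_num)
  rw [abs_le, hS]
  constructor <;> linarith
end

section
/- Fix L > 0 and ρ ∈ (0, L]. There is a constant C = C(L) such that: if l₁, l₂ ∈ (0, L], d₃ > 0 satisfies cosh d₃ = (cosh l₃ + cosh l₁ cosh l₂)/(sinh l₁ sinh l₂) for some l₃ ∈ (0,L], and x > 0 satisfies cosh x = sinh l₂ · sinh d₃ (the pentagon relation), then |x - log(1/l₁)| ≤ C. -/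
set_option maxHeartbeats 1000000


/-- Lemma `lem:width`, second assertion: with the pentagon relation
`cosh x = sinh l₂ · sinh d₃`, the perpendicular from a boundary curve to itself has
half-length `x = log(1/l₁) + O(1)`. -/

theorem self_perpendicular_length_estimate (L ρ : ℝ) (hL : 0 < L) (hρ : 0 < ρ)
    (hρL : ρ ≤ L) :
    ∃ C : ℝ, ∀ l₁ l₂ l₃ d₃ x : ℝ,
      0 < l₁ → l₁ ≤ L → 0 < l₂ → l₂ ≤ L → 0 < l₃ → l₃ ≤ L → 0 < d₃ → 0 < x →
      Real.cosh d₃ =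
        (Real.cosh l₃ + Real.cosh l₁ * Real.cosh l₂) / (Real.sinh l₁ * Real.sinh l₂) →
      Real.cosh x = Real.sinh l₂ * Real.sinh d₃ →
      |x - Real.log (1 / l₁)| ≤ C := by
  have hsL : 0 < Real.sinh L := Real.sinh_pos_iff.2 hL
  set K : ℝ := 1 + 2 / Real.sinh L ^ 2 with hKdef
  have hK1 : 1 < K := by
    have : 0 < 2 / Real.sinh L ^ 2 := by positivity
    simp only [hKdef]; linarith
  have hKpos : 0 < K := by linarith
  set c : ℝ := 1 - 1 / K ^ 2 with hcdef
  have hK2 : 1 < K ^ 2 := one_lt_pow₀ hK1 (by norm_num)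
  have hcpos : 0 < c := by
    have h : 1 / K ^ 2 < 1 := by
      rw [div_lt_one (by positivity)]; exact hK2
    simp only [hcdef]; linarith
  set A : ℝ := 2 * (Real.cosh L + Real.cosh L * Real.cosh L) with hAdef
  set B : ℝ := 2 * c / Real.exp L with hBdef
  have hApos : 0 < A := by
    have := Real.cosh_pos L; simp only [hAdef]; nlinarith
  have hBpos : 0 < B := by positivity
  refine ⟨|Real.log A| + |Real.log B|, ?_⟩
  intro l₁ l₂ l₃ d₃ x h1 h1L h2 h2L h3 h3L hd3 hx hd hxeq
  have hs1 : 0 < Real.sinh l₁ := Real.sinh_pos_iff.2 h1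
  have hs2 : 0 < Real.sinh l₂ := Real.sinh_pos_iff.2 h2
  have hsd3 : 0 < Real.sinh d₃ := Real.sinh_pos_iff.2 hd3
  have hcd3 : 0 < Real.cosh d₃ := Real.cosh_pos d₃
  have hc1 : 1 ≤ Real.cosh l₁ := Real.one_le_cosh l₁
  have hc2 : 1 ≤ Real.cosh l₂ := Real.one_le_cosh l₂
  have hc3 : 1 ≤ Real.cosh l₃ := Real.one_le_cosh l₃
  have hc1L : Real.cosh l₁ ≤ Real.cosh L := by
    rw [Real.cosh_le_cosh, abs_of_pos h1, abs_of_pos hL]; exact h1L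
  have hc2L : Real.cosh l₂ ≤ Real.cosh L := by
    rw [Real.cosh_le_cosh, abs_of_pos h2, abs_of_pos hL]; exact h2L
  have hc3L : Real.cosh l₃ ≤ Real.cosh L := by
    rw [Real.cosh_le_cosh, abs_of_pos h3, abs_of_pos hL]; exact h3L
  have hs1L : Real.sinh l₁ ≤ Real.sinh L := Real.sinh_le_sinh.2 h1L
  have hs2L : Real.sinh l₂ ≤ Real.sinh L := Real.sinh_le_sinh.2 h2L
  -- cleared pentagon relation
  have hd' : Real.cosh d₃ * (Real.sinh l₁ * Real.sinh l₂)
      = Real.cosh l₃ + Real.cosh l₁ * Real.cosh l₂ := by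
    field_simp at hd
    linarith [hd]
  -- numerator lower bound
  have hnum2 : 2 ≤ Real.cosh l₃ + Real.cosh l₁ * Real.cosh l₂ - Real.sinh l₁ * Real.sinh l₂ := by
    have h := Real.cosh_sub l₁ l₂
    have h' := Real.one_le_cosh (l₁ - l₂)
    linarith
  -- K ≤ cosh d₃
  have hKcd : K ≤ Real.cosh d₃ := by
    have h2' : 2 ≤ (Real.cosh d₃ - 1) * (Real.sinh l₁ * Real.sinh l₂) := by
      have hexp : (Real.cosh d₃ - 1) * (Real.sinh l₁ * Real.sinh l₂)
          = Real.cosh l₃ + Real.cosh l₁ * Real.cosh l₂ - Real.sinh l₁ * Real.sinh l₂ := by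
        linear_combination hd'
      linarith
    have hcd1 : 0 ≤ Real.cosh d₃ - 1 := by linarith [Real.one_le_cosh d₃]
    have h2'' : 2 ≤ (Real.cosh d₃ - 1) * Real.sinh L ^ 2 := by
      nlinarith [mul_le_mul hs1L hs2L hs2.le hsL.le]
    have : 2 / Real.sinh L ^ 2 ≤ Real.cosh d₃ - 1 := by
      rw [div_le_iff₀ (by positivity)]; linarith
    simp only [hKdef]; linarith
  have hKsq : K ^ 2 ≤ Real.cosh d₃ ^ 2 := pow_le_pow_left₀ hKpos.le hKcd 2
  -- sinh d₃ ≥ c cosh d₃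
  have key : Real.cosh d₃ ^ 2 - 1 ≤ Real.sinh d₃ * Real.cosh d₃ := by
    have hsc : Real.sinh d₃ < Real.cosh d₃ := Real.sinh_lt_cosh d₃
    have hsq := Real.cosh_sq d₃
    nlinarith
  have hstep : (K ^ 2 - 1) * Real.cosh d₃ ≤ Real.sinh d₃ * K ^ 2 := by
    have h9 : K ^ 2 * (Real.cosh d₃ ^ 2 - 1) ≤ K ^ 2 * (Real.sinh d₃ * Real.cosh d₃) :=
      mul_le_mul_of_nonneg_left key (sq_nonneg K)
    have hmul : (K ^ 2 - 1) * Real.cosh d₃ * Real.cosh d₃ ≤ Real.sinh d₃ * K ^ 2 * Real.cosh d₃ := by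
      nlinarith [h9, hKsq]
    exact le_of_mul_le_mul_right hmul hcd3
  have hsd_ge : c * Real.cosh d₃ ≤ Real.sinh d₃ := by
    have hceq : c = (K ^ 2 - 1) / K ^ 2 := by
      simp only [hcdef]; field_simp
    rw [hceq, div_mul_eq_mul_div, div_le_iff₀ (by positivity)]
    linarith
  -- upper bound : l₁ * exp x ≤ A
  have hexpx : Real.exp x ≤ 2 * Real.cosh x := by
    rw [Real.cosh_eq]
    have := Real.exp_pos (-x)
    linarith
  have hl1s1 : l₁ ≤ Real.sinh l₁ := (Real.self_lt_sinh_iff.2 h1).le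
  have hup : l₁ * Real.exp x ≤ A := by
    have e1 : l₁ * Real.exp x ≤ 2 * l₁ * (Real.sinh l₂ * Real.sinh d₃) := by
      have := mul_le_mul_of_nonneg_left hexpx h1.le
      rw [hxeq] at this; linarith
    have e2 : 2 * l₁ * (Real.sinh l₂ * Real.sinh d₃)
        ≤ 2 * Real.sinh l₁ * (Real.sinh l₂ * Real.cosh d₃) := by
      have hsc : Real.sinh d₃ ≤ Real.cosh d₃ := (Real.sinh_lt_cosh d₃).le
      gcongr
    have e3 : 2 * Real.sinh l₁ * (Real.sinh l₂ * Real.cosh d₃)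
        = 2 * (Real.cosh l₃ + Real.cosh l₁ * Real.cosh l₂) := by
      linear_combination 2 * hd'
    have e4 : 2 * (Real.cosh l₃ + Real.cosh l₁ * Real.cosh l₂) ≤ A := by
      simp only [hAdef]
      nlinarith [mul_le_mul hc1L hc2L (by linarith) (Real.cosh_pos L).le]
    linarith
  -- sinh l₁ ≤ l₁ * exp L
  have hs1le : Real.sinh l₁ ≤ l₁ * Real.exp L := by
    have ha : Real.sinh l₁ ≤ l₁ * Real.exp l₁ := by
      rw [Real.sinh_eq]
      have hb := Real.add_one_le_exp (-(2 * l₁))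
      have h2' : Real.exp (-(2 * l₁)) = Real.exp (-l₁) * Real.exp (-l₁) := by
        rw [← Real.exp_add]; ring_nf
      have h3' : Real.exp l₁ * Real.exp (-l₁) = 1 := by
        rw [← Real.exp_add]; simp
      have hcert : (2 * l₁ * Real.exp l₁ - Real.exp l₁ + Real.exp (-l₁)) * Real.exp (-l₁)
          = 2 * l₁ - 1 + Real.exp (-l₁) * Real.exp (-l₁) := by
        linear_combination (2 * l₁ - 1) * h3'
      have hge : (0:ℝ) ≤ 2 * l₁ * Real.exp l₁ - Real.exp l₁ + Real.exp (-l₁) := by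
        have hb2 : 1 - 2 * l₁ ≤ Real.exp (-l₁) * Real.exp (-l₁) := by
          rw [← h2']; linarith
        have hmul0 : (0:ℝ) * Real.exp (-l₁)
            ≤ (2 * l₁ * Real.exp l₁ - Real.exp l₁ + Real.exp (-l₁)) * Real.exp (-l₁) := by
          rw [zero_mul, hcert]; linarith
        exact le_of_mul_le_mul_right hmul0 (Real.exp_pos (-l₁))
      linarith
    have hb : l₁ * Real.exp l₁ ≤ l₁ * Real.exp L :=
      mul_le_mul_of_nonneg_left (Real.exp_le_exp.2 h1L) h1.le
    linarith
  -- lower bound : B ≤ l₁ * exp x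
  have hcx_exp : Real.cosh x ≤ Real.exp x := by
    rw [Real.cosh_eq]
    have := Real.exp_le_exp.2 (by linarith : -x ≤ x)
    linarith
  have hlow : B ≤ l₁ * Real.exp x := by
    have h2c : 2 * c ≤ Real.cosh x * Real.sinh l₁ := by
      have h7 : 2 ≤ Real.cosh l₃ + Real.cosh l₁ * Real.cosh l₂ := by nlinarith
      have hint1 : 0 ≤ (Real.sinh d₃ - c * Real.cosh d₃) * (Real.sinh l₁ * Real.sinh l₂) :=
        mul_nonneg (sub_nonneg.2 hsd_ge) (mul_pos hs1 hs2).le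
      have hint2 : 0 ≤ c * (Real.cosh l₃ + Real.cosh l₁ * Real.cosh l₂ - 2) :=
        mul_nonneg hcpos.le (by linarith)
      have hd'' : c * (Real.cosh d₃ * (Real.sinh l₁ * Real.sinh l₂))
          = c * (Real.cosh l₃ + Real.cosh l₁ * Real.cosh l₂) := by rw [hd']
      rw [hxeq]
      linarith only [hint1, hint2, hd'']
    have hcp : 0 < Real.cosh x := Real.cosh_pos x
    have h8 : Real.cosh x * Real.sinh l₁ ≤ Real.exp x * (l₁ * Real.exp L) := by
      exact mul_le_mul hcx_exp hs1le hs1.le (Real.exp_pos x).le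
    simp only [hBdef]
    rw [div_le_iff₀ (Real.exp_pos L)]
    linarith only [h2c, h8]
  -- conclude
  have hprod : 0 < l₁ * Real.exp x := by positivity
  have hxl : x - Real.log (1 / l₁) = Real.log (l₁ * Real.exp x) := by
    rw [Real.log_mul h1.ne' (Real.exp_pos x).ne', Real.log_exp, one_div, Real.log_inv]; ring
  rw [hxl, abs_le]
  constructor
  · have hLB : Real.log B ≤ Real.log (l₁ * Real.exp x) := Real.log_le_log hBpos hlow
    have := neg_abs_le (Real.log B)
    have := abs_nonneg (Real.log A)
    linarith
  · have hLA : Real.log (l₁ * Real.exp x) ≤ Real.log A := Real.log_le_log hprod hup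
    have := le_abs_self (Real.log A)
    have := abs_nonneg (Real.log B)
    linarith
end

section
/- For l ∈ (0, 1/2] and d̂ > 0 with |d̂ - 2 log(1/l)| ≤ C₀, and x > 0 defined by cosh x = sinh d̂ · sinh(l/2), the quantity D := (cosh d̂ - 1)/(2 cosh x) satisfies c₁/l ≤ D ≤ c₂/l for constants 0 < c₁ < c₂ depending only on C₀. -/
/-- Analytic content of Lemma `lem:hexagon`(i), case (b): if `l ∈ (0, 1/2]`,
`|d̂ - 2 log(1/l)| ≤ C₀` and `cosh x = sinh d̂ · sinh(l/2)`, then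
`(cosh d̂ - 1)/(2 cosh x)` is comparable to `1/l` with constants depending only on `C₀`. -/
theorem hexagon_derivative_estimate_b (C₀ : ℝ) (hC₀ : 0 ≤ C₀) :
    ∃ c₁ c₂ : ℝ, 0 < c₁ ∧ c₁ < c₂ ∧
      ∀ l dh x : ℝ, 0 < l → l ≤ 1 / 2 → 0 < dh →
        |dh - 2 * Real.log (1 / l)| ≤ C₀ → 0 < x →
        Real.cosh x = Real.sinh dh * Real.sinh (l / 2) →
        c₁ / l ≤ (Real.cosh dh - 1) / (2 * Real.cosh x) ∧
          (Real.cosh dh - 1) / (2 * Real.cosh x) ≤ c₂ / l := by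
  refine ⟨1/4, 1, by norm_num, by norm_num, ?_⟩
  intro l dh x hl hl2 hdh _ hx hcosh
  set S := Real.sinh dh with hSdef
  set s := Real.sinh (l/2) with hsdef
  have hs : 0 < s := Real.sinh_pos_iff.mpr (by linarith)
  have hS : 0 < S := Real.sinh_pos_iff.mpr hdh
  have hcx : 1 < Real.cosh x := Real.one_lt_cosh.mpr (ne_of_gt hx)
  have hSs : 1 < S * s := hcosh ▸ hcx
  -- s ≤ l
  have hsle : s ≤ l := by
    have ht : l/2 ≤ 1/4 := by linarith
    have hB2 : 1 - 2*(l/2) ≤ Real.exp (-(2*(l/2))) := by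
      have := Real.add_one_le_exp (-(2*(l/2))); linarith
    have hBl : 1 - l/2 ≤ Real.exp (-(l/2)) := by
      have := Real.add_one_le_exp (-(l/2)); linarith
    have hAB : Real.exp (l/2) * Real.exp (-(l/2)) = 1 := by
      rw [← Real.exp_add]; simp
    have hsq : Real.exp (-(l/2)) ^ 2 = Real.exp (-(2*(l/2))) := by
      rw [sq, ← Real.exp_add]; ring_nf
    have hBpos : 0 < Real.exp (-(l/2)) := Real.exp_pos _
    rw [hsdef, Real.sinh_eq]
    nlinarith [hB2, hBl, hAB, hBpos, hl, ht, hsq]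
  have hsge : l/2 ≤ s := le_of_lt (Real.self_lt_sinh_iff.mpr (by linarith))
  have hS2 : 2 ≤ S := by nlinarith [hSs, hsle, hl2, hS]
  have hC : Real.cosh dh ^ 2 = S ^ 2 + 1 := Real.cosh_sq dh
  have hCpos : 0 < Real.cosh dh := Real.cosh_pos dh
  have hCub : Real.cosh dh ≤ S + 1 := by nlinarith
  have hClb : S ≤ Real.cosh dh := by nlinarith
  rw [hcosh]
  have hden : 0 < 2 * (S * s) := by positivity
  constructor
  · rw [div_le_div_iff₀ hl hden]
    nlinarith [mul_le_mul_of_nonneg_left hsle (by linarith : (0:ℝ) ≤ Real.cosh dh - 1),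
      mul_le_mul_of_nonneg_right hClb (le_of_lt hs)]
  · rw [div_le_div_iff₀ hden hl]
    nlinarith [mul_le_mul_of_nonneg_right hCub (le_of_lt hl),
      mul_le_mul_of_nonneg_left hsge (by linarith : (0:ℝ) ≤ S)]
end

section
/- Fix L > 0. There exist constants 0 < c₁ < c₂ depending only on L with the following property. Let l₁, l₂ ∈ (0, L], let d₁, d₂, d₃ > 0 satisfy the right-angled hexagon relations cosh d₃ = (cosh l₃ + cosh l₁ cosh l₂)/(sinh l₁ sinh l₂) (and cyclic versions) for some l₃ ∈ (0, L], and let z > 0 be defined by cosh z = sinh d₃ sinh l₁ (pentagon relation). Then the quantity z' := (1/sinh z)·(cosh d₁/sinh d₂) satisfies c₁ l₁ ≤ z' ≤ c₂ l₁, where additionally one uses the sine rule sinh l₁/sinh d₁ = sinh l₂/sinh d₂ = sinh l₃/sinh d₃. -/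
lemma sinh_le_mul_cosh {x : ℝ} (hx : 0 ≤ x) : Real.sinh x ≤ x * Real.cosh x := by
  have h : MonotoneOn (fun y => y * Real.cosh y - Real.sinh y) (Set.Ici 0) := by
    apply monotoneOn_of_deriv_nonneg (convex_Ici 0)
    · fun_prop
    · fun_prop
    · intro y hy
      rw [interior_Ici, Set.mem_Ioi] at hy
      have h1 : HasDerivAt (fun y => y * Real.cosh y - Real.sinh y)
          (1 * Real.cosh y + y * Real.sinh y - Real.cosh y) y :=
        ((hasDerivAt_id y).mul (Real.hasDerivAt_cosh y)).sub (Real.hasDerivAt_sinh y)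
      rw [h1.deriv]
      have h2 : 0 ≤ Real.sinh y := Real.sinh_nonneg_iff.2 hy.le
      nlinarith
  have := h (Set.self_mem_Ici) (Set.mem_Ici.2 hx) hx
  simpa using this

private lemma aux_sq_le {a b : ℝ} (ha : 0 < a) (h : a ≤ b) : a ^ 2 ≤ b ^ 2 := by nlinarith

private lemma aux_coth_sq {c s κ : ℝ} (h1 : 1 < κ) (hs : s ^ 2 = c ^ 2 - 1)
    (hk : κ ^ 2 ≤ c ^ 2) : c ^ 2 * (κ ^ 2 - 1) ≤ κ ^ 2 * s ^ 2 := by nlinarith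

private lemma aux_le_of_one_le_sq {t T : ℝ} (h1 : 1 ≤ t) (h : t ^ 2 ≤ T) : t ≤ T := by
  nlinarith

private lemma aux_one_le_sq {s A u : ℝ} (h : s ^ 2 = A ^ 2 - u ^ 2)
    (h1 : 1 ≤ A - u) (h2 : 1 ≤ A + u) : 1 ≤ s ^ 2 := by nlinarith

private lemma aux_sq_le_sq {s A u B : ℝ} (h : s ^ 2 = A ^ 2 - u ^ 2)
    (h0 : 0 ≤ A - u) (h1 : A - u ≤ B) (h2 : A + u ≤ B) (h3 : 0 ≤ A + u) :
    s ^ 2 ≤ B ^ 2 := by nlinarith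

private lemma aux_one_le_of_sq {s : ℝ} (hs : 0 < s) (h : 1 ≤ s ^ 2) : 1 ≤ s := by
  nlinarith

private lemma aux_le_of_sq {s B : ℝ} (hs : 0 < s) (hB : 0 < B) (h : s ^ 2 ≤ B ^ 2) :
    s ≤ B := by nlinarith

private lemma aux_fac_lo {c3 c1 c2 s2 e : ℝ} (h1 : 1 ≤ c3) (h2 : 0 < c1)
    (he : c2 - s2 = e) (hep : 0 < e) : 1 ≤ (c3 + c1 * c2) - c1 * s2 := by nlinarith

private lemma aux_fac_lo' {c3 c1 s2 c2 : ℝ} (h1 : 1 ≤ c3) (h2 : 0 < c1)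
    (h3 : 0 < s2) (h4 : 0 < c2) : 1 ≤ (c3 + c1 * c2) + c1 * s2 := by nlinarith

private lemma aux_fac_hi {c3 c1 c2 s2 e cL E : ℝ} (he : c2 - s2 = e) (hee : e ≤ 1)
    (h1 : c3 ≤ cL) (h2 : c1 ≤ cL) (h3 : 0 < c1) (h4 : 1 ≤ E) (h5 : 1 ≤ cL)
    (hep : 0 < e) : (c3 + c1 * c2) - c1 * s2 ≤ cL * (1 + E) := by nlinarith

private lemma aux_fac_hi' {c3 c1 c2 s2 e cL E : ℝ} (he : c2 + s2 = e) (hee : e ≤ E)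
    (h1 : c3 ≤ cL) (h2 : c1 ≤ cL) (h3 : 0 < c1) (h5 : 1 ≤ cL) (hep : 0 < e) :
    (c3 + c1 * c2) + c1 * s2 ≤ cL * (1 + E) := by nlinarith

/-- Analytic content of Lemma `lem:proofperp`(i): in a right-angled hexagon with
alternate sides `l₁, l₂, l₃ ≤ L`, opposite sides `d₁, d₂, d₃` (cosine rules),
sine rule, and `z` given by the pentagon relation `cosh z = sinh d₃ sinh l₁`,
the quantity `(1/sinh z)·(cosh d₁/sinh d₂)` is comparable to `l₁` with constants
depending only on `L`. -/
theorem perpendicular_derivative_estimate (L : ℝ) (hL : 0 < L) :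
    ∃ c₁ c₂ : ℝ, 0 < c₁ ∧ c₁ < c₂ ∧
      ∀ l₁ l₂ l₃ d₁ d₂ d₃ z : ℝ,
        0 < l₁ → l₁ ≤ L → 0 < l₂ → l₂ ≤ L → 0 < l₃ → l₃ ≤ L →
        0 < d₁ → 0 < d₂ → 0 < d₃ → 0 < z →
        Real.cosh d₁ =
          (Real.cosh l₁ + Real.cosh l₂ * Real.cosh l₃) / (Real.sinh l₂ * Real.sinh l₃) →
        Real.cosh d₂ =
          (Real.cosh l₂ + Real.cosh l₃ * Real.cosh l₁) / (Real.sinh l₃ * Real.sinh l₁) →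
        Real.cosh d₃ =
          (Real.cosh l₃ + Real.cosh l₁ * Real.cosh l₂) / (Real.sinh l₁ * Real.sinh l₂) →
        Real.sinh l₁ / Real.sinh d₁ = Real.sinh l₂ / Real.sinh d₂ →
        Real.sinh l₂ / Real.sinh d₂ = Real.sinh l₃ / Real.sinh d₃ →
        Real.cosh z = Real.sinh d₃ * Real.sinh l₁ →
        c₁ * l₁ ≤ (1 / Real.sinh z) * (Real.cosh d₁ / Real.sinh d₂) ∧
          (1 / Real.sinh z) * (Real.cosh d₁ / Real.sinh d₂) ≤ c₂ * l₁ := by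
  have hsL : 0 < Real.sinh L := Real.sinh_pos_iff.2 hL
  have hcL : 1 ≤ Real.cosh L := Real.one_le_cosh L
  set κ : ℝ := (Real.cosh L / Real.sinh L) ^ 2 with hκdef
  have hkgt : Real.sinh L < Real.cosh L := by
    nlinarith [Real.cosh_sub_sinh L, Real.exp_pos (-L)]
  have hκ1 : 1 < κ := by
    rw [hκdef]
    have h1 : 1 < Real.cosh L / Real.sinh L := (one_lt_div hsL).2 hkgt
    nlinarith
  have hκs : κ * Real.sinh L ^ 2 = Real.cosh L ^ 2 := by
    rw [hκdef]; field_simp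
  set B : ℝ := Real.cosh L * (1 + Real.exp L) with hBdef
  have hexLpos : (1:ℝ) < Real.exp L := Real.one_lt_exp_iff.2 hL
  have hB1 : 1 < B := by nlinarith
  have hκsub : (0:ℝ) < κ ^ 2 - 1 := by nlinarith
  have hT1 : 1 < κ ^ 2 / (κ ^ 2 - 1) := by
    rw [lt_div_iff₀ hκsub]; nlinarith
  refine ⟨1 / B, Real.cosh L * (κ ^ 2 / (κ ^ 2 - 1)), by positivity, ?_, ?_⟩
  · have h1 : 1 / B < 1 := by rw [div_lt_one (by linarith)]; exact hB1
    nlinarith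
  intro l₁ l₂ l₃ d₁ d₂ d₃ z hl₁ hl₁L hl₂ hl₂L hl₃ hl₃L hd₁ hd₂ hd₃ hzpos
    hcd1 hcd2 hcd3 hsr1 hsr2 hz
  have hsl1 : 0 < Real.sinh l₁ := Real.sinh_pos_iff.2 hl₁
  have hsl2 : 0 < Real.sinh l₂ := Real.sinh_pos_iff.2 hl₂
  have hsl3 : 0 < Real.sinh l₃ := Real.sinh_pos_iff.2 hl₃
  have hsd1 : 0 < Real.sinh d₁ := Real.sinh_pos_iff.2 hd₁
  have hsd2p : 0 < Real.sinh d₂ := Real.sinh_pos_iff.2 hd₂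
  have hsd3p : 0 < Real.sinh d₃ := Real.sinh_pos_iff.2 hd₃
  have hsz : 0 < Real.sinh z := Real.sinh_pos_iff.2 hzpos
  have hcl1 : 1 ≤ Real.cosh l₁ := Real.one_le_cosh l₁
  have hcl2 : 1 ≤ Real.cosh l₂ := Real.one_le_cosh l₂
  have hcl3 : 1 ≤ Real.cosh l₃ := Real.one_le_cosh l₃
  have hcl1pos : (0:ℝ) < Real.cosh l₁ := lt_of_lt_of_le one_pos hcl1
  -- cosh lᵢ ≤ cosh L
  have hclL : ∀ x : ℝ, 0 < x → x ≤ L → Real.cosh x ≤ Real.cosh L := fun x hx hxL =>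
    Real.cosh_le_cosh.2 (by rw [abs_of_pos hx, abs_of_pos hL]; exact hxL)
  have hcl1L := hclL l₁ hl₁ hl₁L
  have hcl3L := hclL l₃ hl₃ hl₃L
  -- coth monotone: cosh L * sinh lᵢ ≤ cosh lᵢ * sinh L
  have hcoth : ∀ x : ℝ, 0 < x → x ≤ L →
      Real.cosh L * Real.sinh x ≤ Real.cosh x * Real.sinh L := by
    intro x hx hxL
    have h0 : 0 ≤ Real.sinh (L - x) := Real.sinh_nonneg_iff.2 (by linarith)
    rw [Real.sinh_sub] at h0
    linarith
  have hcoth2 := hcoth l₂ hl₂ hl₂L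
  have hcoth3 := hcoth l₃ hl₃ hl₃L
  -- Step A: κ ≤ cosh d₁
  have hcd1κ : κ ≤ Real.cosh d₁ := by
    rw [hcd1, le_div_iff₀ (by positivity)]
    have key : (Real.cosh L * Real.sinh l₂) * (Real.cosh L * Real.sinh l₃) ≤
        (Real.cosh l₂ * Real.sinh L) * (Real.cosh l₃ * Real.sinh L) :=
      mul_le_mul hcoth2 hcoth3 (by positivity) (by positivity)
    have h2 : κ * (Real.sinh l₂ * Real.sinh l₃) ≤ Real.cosh l₂ * Real.cosh l₃ := by
      have h3 : κ * (Real.sinh l₂ * Real.sinh l₃) * Real.sinh L ^ 2 ≤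
          (Real.cosh l₂ * Real.cosh l₃) * Real.sinh L ^ 2 := by
        calc κ * (Real.sinh l₂ * Real.sinh l₃) * Real.sinh L ^ 2
            = (Real.cosh L * Real.sinh l₂) * (Real.cosh L * Real.sinh l₃) := by
              linear_combination (Real.sinh l₂ * Real.sinh l₃) * hκs
          _ ≤ (Real.cosh l₂ * Real.sinh L) * (Real.cosh l₃ * Real.sinh L) := key
          _ = (Real.cosh l₂ * Real.cosh l₃) * Real.sinh L ^ 2 := by ring
      exact le_of_mul_le_mul_right h3 (by positivity)
    calc κ * (Real.sinh l₂ * Real.sinh l₃) ≤ Real.cosh l₂ * Real.cosh l₃ := h2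
      _ ≤ Real.cosh l₁ + Real.cosh l₂ * Real.cosh l₃ := by linarith
  -- Step B: coth d₁ bounds
  set t : ℝ := Real.cosh d₁ / Real.sinh d₁ with htdef
  have hsd1sq : Real.sinh d₁ ^ 2 = Real.cosh d₁ ^ 2 - 1 := by
    have := Real.cosh_sq d₁; linarith
  have ht1 : 1 ≤ t := by
    rw [htdef, le_div_iff₀ hsd1, one_mul]
    linarith [Real.cosh_sub_sinh d₁, Real.exp_pos (-d₁)]
  have hcd1pos : 0 < Real.cosh d₁ := lt_of_lt_of_le (by linarith) hcd1κ
  have hκsq : κ ^ 2 ≤ Real.cosh d₁ ^ 2 := aux_sq_le (by linarith) hcd1κ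
  have htsq : t ^ 2 ≤ κ ^ 2 / (κ ^ 2 - 1) := by
    rw [htdef, div_pow, div_le_div_iff₀ (by positivity) hκsub]
    exact aux_coth_sq hκ1 hsd1sq hκsq
  have htT : t ≤ κ ^ 2 / (κ ^ 2 - 1) := aux_le_of_one_le_sq ht1 htsq
  -- Step C: s = sinh z * sinh l₂ and its square
  set A : ℝ := Real.cosh l₃ + Real.cosh l₁ * Real.cosh l₂ with hAdef
  set s : ℝ := Real.sinh z * Real.sinh l₂ with hsdef
  have e1 : Real.sinh z ^ 2 = (Real.sinh d₃ * Real.sinh l₁) ^ 2 - 1 := by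
    rw [← hz]; have := Real.cosh_sq z; linarith
  have e2 : Real.sinh d₃ ^ 2 = Real.cosh d₃ ^ 2 - 1 := by
    have := Real.cosh_sq d₃; linarith
  have e3 : Real.cosh d₃ * (Real.sinh l₁ * Real.sinh l₂) = A := by
    rw [hcd3, hAdef]; field_simp
  have ecl1 : Real.cosh l₁ ^ 2 = Real.sinh l₁ ^ 2 + 1 := Real.cosh_sq l₁
  have hs2 : s ^ 2 = A ^ 2 - (Real.cosh l₁ * Real.sinh l₂) ^ 2 := by
    rw [hsdef]
    linear_combination (Real.sinh l₂ ^ 2) * e1 +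
      (Real.sinh l₁ ^ 2 * Real.sinh l₂ ^ 2) * e2 +
      (Real.cosh d₃ * Real.sinh l₁ * Real.sinh l₂ + A) * e3 +
      (Real.sinh l₂ ^ 2) * ecl1
  have hspos : 0 < s := by positivity
  -- exp facts
  have hex2 : Real.cosh l₂ + Real.sinh l₂ = Real.exp l₂ := Real.cosh_add_sinh l₂
  have hex2' : Real.cosh l₂ - Real.sinh l₂ = Real.exp (-l₂) := Real.cosh_sub_sinh l₂
  have hexle : Real.exp l₂ ≤ Real.exp L := Real.exp_le_exp.2 hl₂L
  have hexneg : Real.exp (-l₂) ≤ 1 := Real.exp_le_one_iff.2 (by linarith)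
  -- Step D: 1 ≤ s ≤ B
  have hfac1 : 1 ≤ A - Real.cosh l₁ * Real.sinh l₂ := by
    rw [hAdef]
    exact aux_fac_lo hcl3 hcl1pos hex2' (Real.exp_pos _)
  have hfac2 : 1 ≤ A + Real.cosh l₁ * Real.sinh l₂ := by
    rw [hAdef]
    exact aux_fac_lo' hcl3 hcl1pos hsl2 (by linarith)
  have hs_lo : 1 ≤ s := aux_one_le_of_sq hspos (aux_one_le_sq hs2 hfac1 hfac2)
  have hf1 : A - Real.cosh l₁ * Real.sinh l₂ ≤ B := by
    rw [hAdef, hBdef]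
    exact aux_fac_hi hex2' hexneg hcl3L hcl1L hcl1pos (by linarith) hcL (Real.exp_pos _)
  have hf2 : A + Real.cosh l₁ * Real.sinh l₂ ≤ B := by
    rw [hAdef, hBdef]
    exact aux_fac_hi' hex2 hexle hcl3L hcl1L hcl1pos hcL (Real.exp_pos _)
  have hs_hi : s ≤ B :=
    aux_le_of_sq hspos (by linarith) (aux_sq_le_sq hs2 (by linarith) hf1 hf2 (by linarith))
  -- Step E: rewrite the quantity
  have hsd2eq : Real.sinh l₁ * Real.sinh d₂ = Real.sinh l₂ * Real.sinh d₁ := by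
    rw [div_eq_div_iff hsd1.ne' hsd2p.ne'] at hsr1
    linarith
  have hQ : (1 / Real.sinh z) * (Real.cosh d₁ / Real.sinh d₂) =
      Real.sinh l₁ * t / s := by
    rw [htdef, hsdef]
    field_simp
    linear_combination -hsd2eq
  rw [hQ]
  -- sinh l₁ bounds
  have hsl1lo : l₁ ≤ Real.sinh l₁ := le_of_lt (Real.self_lt_sinh_iff.2 hl₁)
  have hsl1hi : Real.sinh l₁ ≤ l₁ * Real.cosh L :=
    (sinh_le_mul_cosh hl₁.le).trans (mul_le_mul_of_nonneg_left hcl1L hl₁.le)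
  constructor
  · -- lower bound
    have h1 : l₁ ≤ Real.sinh l₁ * t :=
      hsl1lo.trans (le_mul_of_one_le_right hsl1.le ht1)
    calc 1 / B * l₁ = l₁ / B := by ring
    _ ≤ Real.sinh l₁ * t / s := div_le_div₀ (by positivity) h1 hspos hs_hi
  · -- upper bound
    have h1 : Real.sinh l₁ * t / s ≤ Real.sinh l₁ * t :=
      div_le_self (by positivity) hs_lo
    have h2 : Real.sinh l₁ * t ≤ (l₁ * Real.cosh L) * (κ ^ 2 / (κ ^ 2 - 1)) :=
      mul_le_mul hsl1hi htT (by linarith) (by positivity)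
    calc Real.sinh l₁ * t / s ≤ (l₁ * Real.cosh L) * (κ ^ 2 / (κ ^ 2 - 1)) :=
      h1.trans h2
    _ = Real.cosh L * (κ ^ 2 / (κ ^ 2 - 1)) * l₁ := by ring
end
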